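/- Let H be Hermitian on ℂ^d with nontrivial variance, and consider the trivially extended Hamiltonian H ⊗ I_n on ℂ^d ⊗ ℂ^n with state ϱ ⊗ I_n/n. Then the inverse temperature is unchanged: Cov_{dn}(H⊗I, −log(ϱ⊗I/n)) / Δ²_{dn}(H⊗I) = Cov_d(H, −log ϱ) / Δ²_d(H), where Cov_m and Δ²_m denote covariance and variance with respect to the maximally mixed state on the m-dimensional space. -/

import Mathlib

open Matrix
open scoped ComplexOrder

/-- Covariance of two matrices with respect to the maximally mixed state. -/
noncomputable def mCov {m : Type*} [Fintype m] (X Y : Matrix m m ℂ) : ℂ :=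
  (X * Y).trace / (Fintype.card m) - X.trace * Y.trace / ((Fintype.card m : ℂ)) ^ 2

/-- Variance of a matrix with respect to the maximally mixed state. -/
noncomputable def mVar {m : Type*} [Fintype m] (H : Matrix m m ℂ) : ℂ :=
  (H * H).trace / (Fintype.card m) - (H.trace / (Fintype.card m)) ^ 2

/-
Both `Cov` and `Δ²` are unchanged by `X ↦ X ⊗ I_n`, since every trace acquires a factor `n`
which cancels against the dimension `dn`; and `Cov(H, ·)` ignores the scalar shift `−log n · I`
in `log(ϱ ⊗ I/n)`, because `Cov(H, I) = Tr H / m − Tr H · m / m² = 0`.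
-/

open scoped Kronecker

section MaximallyMixed

variable {m p : Type*} [Fintype m] [Fintype p]

theorem mVar_eq_mCov_self (X : Matrix m m ℂ) : mVar X = mCov X X := by
  unfold mVar mCov
  ring

theorem mCov_neg_right (X Y : Matrix m m ℂ) : mCov X (-Y) = -mCov X Y := by
  unfold mCov
  simp only [Matrix.mul_neg, trace_neg]
  ring

theorem mCov_sub_smul_one_right [DecidableEq m] (X Y : Matrix m m ℂ) (c : ℂ) :
    mCov X (Y - c • (1 : Matrix m m ℂ)) = mCov X Y := by
  unfold mCov
  simp only [Matrix.mul_sub, Matrix.mul_smul, Matrix.mul_one, trace_sub, trace_smul, trace_one,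
    smul_eq_mul]
  rcases eq_or_ne (Fintype.card m : ℂ) 0 with hm | hm
  · simp [hm]
  · field_simp
    ring

variable [DecidableEq p]

theorem trace_kronecker_one (A : Matrix m m ℂ) :
    (A ⊗ₖ (1 : Matrix p p ℂ)).trace = Fintype.card p * A.trace := by
  rw [trace_kronecker, trace_one, mul_comm]

theorem mCov_kronecker_one [Nonempty p] (X Y : Matrix m m ℂ) :
    mCov (X ⊗ₖ (1 : Matrix p p ℂ)) (Y ⊗ₖ 1) = mCov X Y := by
  have hp : (Fintype.card p : ℂ) ≠ 0 := Nat.cast_ne_zero.mpr Fintype.card_ne_zero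
  unfold mCov
  rw [← mul_kronecker_mul, Matrix.one_mul, trace_kronecker_one, trace_kronecker_one,
    trace_kronecker_one, Fintype.card_prod, Nat.cast_mul]
  rcases eq_or_ne (Fintype.card m : ℂ) 0 with hm | hm
  · simp [hm]
  · field_simp

theorem mVar_kronecker_one [Nonempty p] (X : Matrix m m ℂ) :
    mVar (X ⊗ₖ (1 : Matrix p p ℂ)) = mVar X := by
  rw [mVar_eq_mCov_self, mVar_eq_mCov_self, mCov_kronecker_one]

end MaximallyMixed

theorem inverse_temperature_trivial_extension_general
    {d n : ℕ} (hn : 0 < n)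
    (H : Matrix (Fin d) (Fin d) ℂ)
    (L : Matrix (Fin d) (Fin d) ℂ)
    (L' : Matrix (Fin d × Fin n) (Fin d × Fin n) ℂ)
    (hL' : L' = Matrix.kroneckerMap (· * ·) L (1 : Matrix (Fin n) (Fin n) ℂ) -
      ((Real.log n : ℝ) : ℂ) • (1 : Matrix (Fin d × Fin n) (Fin d × Fin n) ℂ)) :
    mCov (Matrix.kroneckerMap (· * ·) H (1 : Matrix (Fin n) (Fin n) ℂ)) (-L') /
        mVar (Matrix.kroneckerMap (· * ·) H (1 : Matrix (Fin n) (Fin n) ℂ)) =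
      mCov H (-L) / mVar H := by
  have : Nonempty (Fin n) := ⟨⟨0, hn⟩⟩
  rw [hL', mCov_neg_right, mCov_sub_smul_one_right, mCov_kronecker_one, mVar_kronecker_one,
    mCov_neg_right]

/-- The inverse temperature `Cov(H, −log ϱ)/Δ²H` is invariant under trivially extending
the system by a maximally mixed ancilla: for `H ⊗ I` and `ϱ ⊗ I/n`, whose logarithm is
`(log ϱ) ⊗ I − (log n)·I`, the ratio is unchanged. -/
theorem inverse_temperature_trivial_extension
    {d n : ℕ} (hd : 0 < d) (hn : 0 < n)
    (H : Matrix (Fin d) (Fin d) ℂ) (hH : H.IsHermitian) (hvar : mVar H ≠ 0)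
    (ϱ : Matrix (Fin d) (Fin d) ℂ) (hϱ : ϱ.PosDef) (hϱtr : ϱ.trace = 1)
    (L : Matrix (Fin d) (Fin d) ℂ) (hL : L.IsHermitian)
    (hexp : NormedSpace.exp L = ϱ)
    (L' : Matrix (Fin d × Fin n) (Fin d × Fin n) ℂ)
    (hL' : L' = Matrix.kroneckerMap (· * ·) L (1 : Matrix (Fin n) (Fin n) ℂ) -
      ((Real.log n : ℝ) : ℂ) • (1 : Matrix (Fin d × Fin n) (Fin d × Fin n) ℂ)) :
    mCov (Matrix.kroneckerMap (· * ·) H (1 : Matrix (Fin n) (Fin n) ℂ)) (-L') /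
        mVar (Matrix.kroneckerMap (· * ·) H (1 : Matrix (Fin n) (Fin n) ℂ)) =
      mCov H (-L) / mVar H :=
  inverse_temperature_trivial_extension_general hn H L L' hL'
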